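/- Let L ≥ 1 and let p: [0,∞) × Λ_L → ℝ satisfy, for some constants C₀, δ₀, γ₂ > 0: (i) t ↦ p_{t,x} is C¹ on [0,∞); (ii) p_{t,x} ≥ 0 and |∂_t p_{t,x}|, p_{t,x} ≤ C₀ e^{−γ₂|x| − δ₀ t}; (iii) ∫₀^∞ dt Σ_{x∈Λ_L} p_{t,x} = 1 and ∫₀^{t₀} dt Σ_{x∈Λ_L} p_{t,x} < 1 for every t₀ ≥ 0. Define the Laplace–Fourier transform p̂(λ,k) := ∫₀^∞ ds Σ_{y∈Λ_L} p_{s,y} e^{−sλ} e^{−i2πk·y} for k ∈ Λ_L* and Re λ > −δ₀. Then for every ε > 0 there exists c_ε > 0 such that |p̂(ε + iα, k)| ≤ 1 − c_ε for all α ∈ ℝ and all k ∈ Λ_L*. -/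

import Mathlib

open Real MeasureTheory
open scoped BigOperators

noncomputable section

/-- Centered representative of an element of the cyclic lattice `Λ_L`. -/
def zrep (L : ℕ) (x : ZMod L) : ℤ :=
  if (x.val : ℤ) ≤ (L : ℤ) / 2 then (x.val : ℤ) else (x.val : ℤ) - (L : ℤ)

/-- Hypotheses on the memory kernel `p`: regularity, positivity, uniform exponential
bounds, normalization, and strict subprobability on finite time intervals. -/
def RenewalHyp (L : ℕ) [NeZero L] (p : ℝ → ZMod L → ℝ) (C₀ δ₀ γ₂ : ℝ) : Prop :=
  (∀ x : ZMod L, ContDiffOn ℝ 1 (fun t => p t x) (Set.Ici 0)) ∧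
  (∀ t ≥ (0:ℝ), ∀ x : ZMod L,
    0 ≤ p t x ∧
    |derivWithin (fun s => p s x) (Set.Ici 0) t| ≤
      C₀ * Real.exp (-γ₂ * |(zrep L x : ℝ)| - δ₀ * t) ∧
    p t x ≤ C₀ * Real.exp (-γ₂ * |(zrep L x : ℝ)| - δ₀ * t)) ∧
  (∫ t in Set.Ioi (0:ℝ), ∑ x : ZMod L, p t x) = 1 ∧
  (∀ t₀ ≥ (0:ℝ), (∫ t in (0:ℝ)..t₀, ∑ x : ZMod L, p t x) < 1)

/-- `G` is a continuous solution of the renewal equation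
`G(t,x) = p_{t,x} + ∫₀^t ds Σ_y G(t−s,x−y) p_{s,y}` (extended by `0` for `t < 0`). -/
def IsGreen (L : ℕ) [NeZero L] (p : ℝ → ZMod L → ℝ) (G : ℝ → ZMod L → ℝ) : Prop :=
  (∀ x : ZMod L, ContinuousOn (fun t => G t x) (Set.Ici 0)) ∧
  (∀ t < (0:ℝ), ∀ x : ZMod L, G t x = 0) ∧
  ∀ t ≥ (0:ℝ), ∀ x : ZMod L, G t x = p t x +
    ∫ s in (0:ℝ)..t, ∑ y : ZMod L, G (t - s) (x - y) * p s y

/-- The Laplace–Fourier transform `p̂(λ,k)` of the kernel, with `k = (zrep κ)/L ∈ Λ_L*`. -/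
def phat (L : ℕ) [NeZero L] (p : ℝ → ZMod L → ℝ) (lam : ℂ) (κ : ZMod L) : ℂ :=
  ∫ s in Set.Ioi (0:ℝ), ∑ y : ZMod L,
    (p s y : ℂ) * Complex.exp (-(s : ℂ) * lam) *
      Complex.exp ((-(2 * π * ((zrep L κ : ℝ) / (L : ℝ)) * (zrep L y : ℝ)) : ℝ) * Complex.I)

/-!
Since `p ≥ 0`, the triangle inequality bounds `|p̂(ε + iα, k)|` by the damped total mass
`∫₀^∞ (Σₓ p_{t,x}) e^{-εt} dt`, uniformly in `α` and `k`. The damping factor is `< 1` for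
`t > 0` and the undamped mass is `1`, so the damped mass is strictly below `1`; the gap is `c_ε`.
-/

open Complex in
theorem norm_sum_mul_exp_mul_I_le {ι : Type*} (s : Finset ι) {a : ι → ℝ}
    (ha : ∀ i ∈ s, 0 ≤ a i) (z : ℂ) (θ : ι → ℝ) :
    ‖∑ i ∈ s, (a i : ℂ) * z * exp ((θ i : ℂ) * I)‖ ≤ (∑ i ∈ s, a i) * ‖z‖ :=
  calc ‖∑ i ∈ s, (a i : ℂ) * z * exp ((θ i : ℂ) * I)‖
      ≤ ∑ i ∈ s, ‖(a i : ℂ) * z * exp ((θ i : ℂ) * I)‖ := norm_sum_le _ _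
    _ = ∑ i ∈ s, a i * ‖z‖ := Finset.sum_congr rfl fun i hi => by
        rw [norm_mul, norm_mul, norm_exp_ofReal_mul_I, mul_one, norm_real, Real.norm_eq_abs,
          abs_of_nonneg (ha i hi)]
    _ = (∑ i ∈ s, a i) * ‖z‖ := (Finset.sum_mul _ _ _).symm

theorem norm_phat_le {L : ℕ} [NeZero L] {p : ℝ → ZMod L → ℝ}
    (hp : ∀ t > (0 : ℝ), ∀ x, 0 ≤ p t x) (lam : ℂ) (κ : ZMod L)
    (hint : IntegrableOn (fun t => (∑ x, p t x) * Real.exp (-t * lam.re)) (Set.Ioi 0)) :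
    ‖phat L p lam κ‖ ≤ ∫ t in Set.Ioi 0, (∑ x, p t x) * Real.exp (-t * lam.re) := by
  refine norm_integral_le_of_norm_le hint ?_
  filter_upwards [ae_restrict_mem measurableSet_Ioi] with t ht
  refine (norm_sum_mul_exp_mul_I_le _ (fun x _ => hp t ht x) _ _).trans_eq ?_
  simp [Complex.norm_exp]

theorem integral_mul_lt_integral_of_lt_one {α : Type*} [MeasurableSpace α] {μ : Measure α}
    {f w : α → ℝ} (hf : Integrable f μ) (hfw : Integrable (fun x => f x * w x) μ)
    (hf0 : 0 ≤ᵐ[μ] f) (hfne : ∫ x, f x ∂μ ≠ 0) (hw1 : ∀ᵐ x ∂μ, w x < 1) :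
    ∫ x, f x * w x ∂μ < ∫ x, f x ∂μ := by
  have hgap_int : Integrable (fun x => f x * (1 - w x)) μ := by
    simp only [mul_sub, mul_one]
    exact hf.sub hfw
  have hgap0 : 0 ≤ᵐ[μ] fun x => f x * (1 - w x) := by
    filter_upwards [hf0, hw1] with x h0 h1
    exact mul_nonneg h0 (sub_nonneg.2 h1.le)
  have hgap : ∫ x, f x * (1 - w x) ∂μ = ∫ x, f x ∂μ - ∫ x, f x * w x ∂μ := by
    simp only [mul_sub, mul_one]
    exact integral_sub hf hfw
  suffices 0 < ∫ x, f x * (1 - w x) ∂μ by linarith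
  refine (integral_nonneg_of_ae hgap0).lt_of_ne fun h => hfne ?_
  -- `f (1 - w) = 0` a.e. forces `f = 0` a.e., since `1 - w > 0`.
  have hzero := (integral_eq_zero_iff_of_nonneg_ae hgap0 hgap_int).1 h.symm
  refine integral_eq_zero_of_ae ?_
  filter_upwards [hzero, hw1] with x hx h1
  exact (mul_eq_zero.1 hx).resolve_right (sub_ne_zero.2 h1.ne')

theorem stmt14_general (L : ℕ) [NeZero L] (p : ℝ → ZMod L → ℝ) (C₀ δ₀ γ₂ : ℝ)
    (hp : RenewalHyp L p C₀ δ₀ γ₂) :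
    ∀ ε > (0:ℝ), ∃ cε > (0:ℝ), ∀ α : ℝ, ∀ κ : ZMod L,
      ‖phat L p ((ε : ℂ) + (α : ℂ) * Complex.I) κ‖ ≤ 1 - cε := by
  obtain ⟨-, hbound, hmass, -⟩ := hp
  intro ε hε
  have hp0 : ∀ t > (0 : ℝ), ∀ x, 0 ≤ p t x := fun t ht x => (hbound t ht.le x).1
  have hf : IntegrableOn (fun t => ∑ x, p t x) (Set.Ioi 0) :=
    Integrable.of_integral_ne_zero (hmass ▸ one_ne_zero)
  have hdamping : ∀ t ∈ Set.Ioi (0 : ℝ), Real.exp (-t * ε) < 1 := fun t (ht : 0 < t) =>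
    Real.exp_lt_one_iff.2 (by nlinarith)
  have hdamped : IntegrableOn (fun t => (∑ x, p t x) * Real.exp (-t * ε)) (Set.Ioi 0) :=
    hf.mul_bdd (by fun_prop) (ae_restrict_of_forall_mem measurableSet_Ioi fun t ht => by
      rw [Real.norm_of_nonneg (Real.exp_pos _).le]
      exact (hdamping t ht).le)
  have hlt := integral_mul_lt_integral_of_lt_one hf hdamped
    (ae_restrict_of_forall_mem measurableSet_Ioi fun t ht =>
      Finset.sum_nonneg fun x _ => hp0 t ht x)
    (hmass ▸ one_ne_zero) (ae_restrict_of_forall_mem measurableSet_Ioi hdamping)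
  refine ⟨1 - ∫ t in Set.Ioi 0, (∑ x, p t x) * Real.exp (-t * ε), by linarith, fun α κ => ?_⟩
  have hre : ((ε : ℂ) + α * Complex.I).re = ε := by simp
  have hnorm := norm_phat_le hp0 _ κ (by rwa [hre])
  rwa [hre, ← sub_sub_cancel 1 (∫ t in Set.Ioi 0, _)] at hnorm

/-- Proposition B.1, item 2: `|p̂(ε+iα,k)| ≤ 1 − c_ε` uniformly in `α, k`. -/
theorem stmt14 (L : ℕ) [NeZero L] (hL : 1 ≤ L) (p : ℝ → ZMod L → ℝ) (C₀ δ₀ γ₂ : ℝ)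
    (hC₀ : 0 < C₀) (hδ₀ : 0 < δ₀) (hγ₂ : 0 < γ₂) (hp : RenewalHyp L p C₀ δ₀ γ₂) :
    ∀ ε > (0:ℝ), ∃ cε > (0:ℝ), ∀ α : ℝ, ∀ κ : ZMod L,
      ‖phat L p ((ε : ℂ) + (α : ℂ) * Complex.I) κ‖ ≤ 1 - cε :=
  stmt14_general L p C₀ δ₀ γ₂ hp
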